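/- arXiv:1805.03920 — 6 statements merged into one kernel-verified Lean document; each statement's English description precedes it below -/
import Mathlib

section
/- Let C₃ ∈ ℕ≥1 and D ∈ ℤ \ {0} with gcd(C₃, D) = 1. Fix coprime integers (u, v) with C₃·min(u², v²) > −D. If coprime positive integers (a, b) satisfy C₃ ∣ b − a and the equation a·u² − b·v² = ((b − a)/C₃)·D, then, setting k = gcd(C₃u² + D, C₃v² + D), one has a = (C₃v² + D)/k and b = (C₃u² + D)/k. -/
/-!
Multiplying the equation by `C₃` and using `C₃ ∣ b − a` turns it into
`a (C₃u² + D) = b (C₃v² + D)`. Since `a` and `b` are coprime, `C₃u² + D = b m` and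
`C₃v² + D = a m` for a single `m`, positive because `b` and `C₃u² + D` are; then
`gcd (b m) (a m) = m`, and dividing by it gives `a` and `b` back.
-/

lemma mul_add_eq_mul_add_of_dvd_sub {c a b u v D : ℤ} (hdvd : c ∣ b - a)
    (heq : a * u ^ 2 - b * v ^ 2 = ((b - a) / c) * D) :
    a * (c * u ^ 2 + D) = b * (c * v ^ 2 + D) := by
  linear_combination c * heq + D * Int.mul_ediv_cancel' hdvd

lemma IsCoprime.exists_pos_eq_mul_of_mul_eq_mul {a b X Y : ℤ} (hab : IsCoprime a b)
    (hb : 0 < b) (hX : 0 < X) (h : a * X = b * Y) :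
    ∃ m, 0 < m ∧ X = b * m ∧ Y = a * m := by
  obtain ⟨m, hm⟩ := hab.symm.dvd_of_dvd_mul_left ⟨Y, h⟩
  refine ⟨m, pos_of_mul_pos_right (hm ▸ hX) hb.le, hm, ?_⟩
  apply mul_left_cancel₀ hb.ne'
  rw [← h, hm]
  ring

lemma IsCoprime.ediv_gcd_eq_of_mul_eq_mul {a b X Y : ℤ} (hab : IsCoprime a b)
    (hb : 0 < b) (hX : 0 < X) (h : a * X = b * Y) :
    X / (Int.gcd X Y : ℤ) = b ∧ Y / (Int.gcd X Y : ℤ) = a := by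
  obtain ⟨m, hm, rfl, rfl⟩ := hab.exists_pos_eq_mul_of_mul_eq_mul hb hX h
  have hgcd : (Int.gcd (b * m) (a * m) : ℤ) = m := by
    rw [mul_comm b, mul_comm a, Int.gcd_mul_left, Int.isCoprime_iff_gcd_eq_one.mp hab.symm,
      mul_one, Int.natAbs_of_nonneg hm.le]
  rw [hgcd]
  exact ⟨Int.mul_ediv_cancel _ hm.ne', Int.mul_ediv_cancel _ hm.ne'⟩

theorem pell_parametrization_general (C₃ : ℕ) (D : ℤ)
    (u v : ℤ)
    (hmin : (C₃ : ℤ) * min (u ^ 2) (v ^ 2) > -D)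
    (a b : ℤ) (hb : 0 < b) (hab : IsCoprime a b)
    (hdvd : (C₃ : ℤ) ∣ b - a)
    (heq : a * u ^ 2 - b * v ^ 2 = ((b - a) / (C₃ : ℤ)) * D) :
    a = ((C₃ : ℤ) * v ^ 2 + D) /
        (Int.gcd ((C₃ : ℤ) * u ^ 2 + D) ((C₃ : ℤ) * v ^ 2 + D) : ℤ) ∧
    b = ((C₃ : ℤ) * u ^ 2 + D) /
        (Int.gcd ((C₃ : ℤ) * u ^ 2 + D) ((C₃ : ℤ) * v ^ 2 + D) : ℤ) := by
  have hX : 0 < (C₃ : ℤ) * u ^ 2 + D := by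
    have := mul_le_mul_of_nonneg_left (min_le_left (u ^ 2) (v ^ 2)) (Int.natCast_nonneg C₃)
    linarith
  obtain ⟨hbX, haY⟩ :=
    hab.ediv_gcd_eq_of_mul_eq_mul hb hX (mul_add_eq_mul_add_of_dvd_sub hdvd heq)
  exact ⟨haY.symm, hbX.symm⟩

/-- If coprime positive `(a, b)` with `C₃ ∣ b − a` solve `a u² − b v² = ((b−a)/C₃) D`,
then `a = (C₃ v² + D)/k` and `b = (C₃ u² + D)/k` with `k = gcd(C₃ u² + D, C₃ v² + D)`. -/
theorem pell_parametrization (C₃ : ℕ) (hC : 1 ≤ C₃) (D : ℤ) (hD : D ≠ 0)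
    (hCD : Int.gcd (C₃ : ℤ) D = 1)
    (u v : ℤ) (huv : IsCoprime u v)
    (hmin : (C₃ : ℤ) * min (u ^ 2) (v ^ 2) > -D)
    (a b : ℤ) (ha : 0 < a) (hb : 0 < b) (hab : IsCoprime a b)
    (hdvd : (C₃ : ℤ) ∣ b - a)
    (heq : a * u ^ 2 - b * v ^ 2 = ((b - a) / (C₃ : ℤ)) * D) :
    a = ((C₃ : ℤ) * v ^ 2 + D) /
        (Int.gcd ((C₃ : ℤ) * u ^ 2 + D) ((C₃ : ℤ) * v ^ 2 + D) : ℤ) ∧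
    b = ((C₃ : ℤ) * u ^ 2 + D) /
        (Int.gcd ((C₃ : ℤ) * u ^ 2 + D) ((C₃ : ℤ) * v ^ 2 + D) : ℤ) :=
  pell_parametrization_general C₃ D u v hmin a b hb hab hdvd heq
end

section
/- Let C₃ ∈ ℕ≥1 and D ∈ ℤ \ {0} with gcd(C₃, D) = 1, and let (u, v) be coprime integers with C₃·min(u², v²) > −D. Set k = gcd(C₃u² + D, C₃v² + D), a = (C₃v² + D)/k, b = (C₃u² + D)/k. Then a and b are integers, gcd(a, b) = 1, C₃ divides b − a, and a·u² − b·v² = ((b − a)/C₃)·D. -/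
/-!
Write `X = C₃u² + D = b k` and `Y = C₃v² + D = a k`. Since `C₃` is coprime to `D`, it is coprime
to `X` and hence to `k`; as `k ∣ X - Y = C₃ (u² - v²)`, this gives `u² - v² = t k`. Cancelling `k`
from `(b - a) k = C₃ t k` and `(a u² - b v²) k = t D k` yields `b - a = C₃ t` and the equation.
-/

theorem dvd_sub_of_dvd_mul_add_of_dvd_mul_add {R : Type*} [CommRing R] {c d x y k : R}
    (hcd : IsCoprime c d) (hx : k ∣ c * x + d) (hy : k ∣ c * y + d) : k ∣ x - y := by
  have hcx : IsCoprime c (c * x + d) := by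
    simpa only [add_comm] using hcd.add_mul_left_right x
  have hck : IsCoprime c k := hcx.of_isCoprime_of_dvd_right hx
  have hdiff : k ∣ c * (x - y) := by
    simpa only [mul_sub, add_sub_add_right_eq_sub] using dvd_sub hx hy
  exact hck.symm.dvd_of_dvd_mul_left hdiff

theorem sub_eq_mul_and_mul_sub_mul_eq_of_mul_eq {R : Type*} [CommRing R] [IsDomain R]
    {c d x y k a b t : R} (hk : k ≠ 0) (ha : a * k = c * y + d) (hb : b * k = c * x + d)
    (ht : x - y = k * t) :
    b - a = c * t ∧ a * x - b * y = t * d := by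
  constructor
  · exact mul_right_cancel₀ hk (by linear_combination hb - ha + c * ht)
  · exact mul_right_cancel₀ hk (by linear_combination x * ha - y * hb + d * ht)

theorem pell_parametrization_converse_general (C₃ : ℕ) (hC : 1 ≤ C₃) (D : ℤ)
    (hCD : Int.gcd (C₃ : ℤ) D = 1)
    (u v : ℤ)
    (hmin : (C₃ : ℤ) * min (u ^ 2) (v ^ 2) > -D)
    (k a b : ℤ)
    (hk : k = (Int.gcd ((C₃ : ℤ) * u ^ 2 + D) ((C₃ : ℤ) * v ^ 2 + D) : ℤ))
    (ha : a = ((C₃ : ℤ) * v ^ 2 + D) / k)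
    (hb : b = ((C₃ : ℤ) * u ^ 2 + D) / k) :
    k ∣ (C₃ : ℤ) * v ^ 2 + D ∧ k ∣ (C₃ : ℤ) * u ^ 2 + D ∧
    IsCoprime a b ∧ (C₃ : ℤ) ∣ b - a ∧
    a * u ^ 2 - b * v ^ 2 = ((b - a) / (C₃ : ℤ)) * D := by
  have hC₀ : (C₃ : ℤ) ≠ 0 := by exact_mod_cast Nat.one_le_iff_ne_zero.mp hC
  have hYpos : 0 < (C₃ : ℤ) * v ^ 2 + D := by
    nlinarith [min_le_right (u ^ 2) (v ^ 2)]
  have hkX : k ∣ (C₃ : ℤ) * u ^ 2 + D := hk ▸ Int.gcd_dvd_left _ _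
  have hkY : k ∣ (C₃ : ℤ) * v ^ 2 + D := hk ▸ Int.gcd_dvd_right _ _
  have hgcd_pos : 0 < Int.gcd ((C₃ : ℤ) * v ^ 2 + D) ((C₃ : ℤ) * u ^ 2 + D) :=
    Int.gcd_pos_of_ne_zero_left _ hYpos.ne'
  have hk₀ : k ≠ 0 := by rw [hk, Int.gcd_comm]; exact_mod_cast hgcd_pos.ne'
  have hab : IsCoprime a b := by
    rw [Int.isCoprime_iff_gcd_eq_one, ha, hb, hk, Int.gcd_comm ((C₃ : ℤ) * u ^ 2 + D)]
    exact Int.gcd_ediv_gcd_ediv_gcd hgcd_pos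
  obtain ⟨t, ht⟩ := dvd_sub_of_dvd_mul_add_of_dvd_mul_add
    (Int.isCoprime_iff_gcd_eq_one.mpr hCD) hkX hkY
  obtain ⟨hba, heq⟩ := sub_eq_mul_and_mul_sub_mul_eq_of_mul_eq hk₀
    (ha ▸ Int.ediv_mul_cancel hkY) (hb ▸ Int.ediv_mul_cancel hkX) ht
  refine ⟨hkY, hkX, hab, ⟨t, hba⟩, ?_⟩
  rwa [hba, Int.mul_ediv_cancel_left _ hC₀]

/-- Converse parametrization: with `k = gcd(C₃ u² + D, C₃ v² + D)`,
`a = (C₃ v² + D)/k`, `b = (C₃ u² + D)/k`, the pair `(a, b)` consists of integers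
(`k` divides both values), is coprime, satisfies `C₃ ∣ b − a` and the equation
`a u² − b v² = ((b − a)/C₃) D`. -/
theorem pell_parametrization_converse (C₃ : ℕ) (hC : 1 ≤ C₃) (D : ℤ) (hD : D ≠ 0)
    (hCD : Int.gcd (C₃ : ℤ) D = 1)
    (u v : ℤ) (huv : IsCoprime u v)
    (hmin : (C₃ : ℤ) * min (u ^ 2) (v ^ 2) > -D)
    (k a b : ℤ)
    (hk : k = (Int.gcd ((C₃ : ℤ) * u ^ 2 + D) ((C₃ : ℤ) * v ^ 2 + D) : ℤ))
    (ha : a = ((C₃ : ℤ) * v ^ 2 + D) / k)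
    (hb : b = ((C₃ : ℤ) * u ^ 2 + D) / k) :
    k ∣ (C₃ : ℤ) * v ^ 2 + D ∧ k ∣ (C₃ : ℤ) * u ^ 2 + D ∧
    IsCoprime a b ∧ (C₃ : ℤ) ∣ b - a ∧
    a * u ^ 2 - b * v ^ 2 = ((b - a) / (C₃ : ℤ)) * D :=
  pell_parametrization_converse_general C₃ hC D hCD u v hmin k a b hk ha hb
end

section
/- Let a, b, u, v be integers with gcd(a,b) = 1 and gcd(u,v) = 1, satisfying a·u² − b·v² = (b − a)·D/C₃ with C₃ ∣ b − a and gcd(C₃W, D) = 1 for given positive integers C₃, W and nonzero integer D. Then gcd(u², b)·gcd(v², a) divides D, and gcd(u − v, b − a) divides (b − a)/C₃. -/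
/-!
Write `M = (b - a)/C₃`. Since `a` and `b` are coprime, each of them is coprime to `b - a`,
hence to `M`. The divisors `gcd(u², b)` and `gcd(v², a)` of `b` and `a` are coprime, both
divide `a u² − b v² = M D`, and are coprime to `M`, so their product divides `D`.
From `a u² − b v² = a (u² − v²) − (b − a) v²`, `gcd(u − v, b − a)` divides `M D`; it also
divides `M C₃ = b − a`, and `C₃` is coprime to `D`, so it divides `M`.
-/

namespace IsCoprime

variable {R : Type*} [CommRing R]

theorem sub_self_right {a b : R} (h : IsCoprime a b) : IsCoprime a (b - a) := by
  simpa using sub_mul_left_right_iff (z := 1) |>.mpr h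

theorem sub_self_left {a b : R} (h : IsCoprime a b) : IsCoprime b (b - a) := by
  simpa using (sub_mul_left_right_iff (z := 1) |>.mpr h.symm).neg_right

theorem dvd_of_dvd_mul_of_dvd_mul {x y g m : R} (h : IsCoprime x y) (hx : g ∣ m * x)
    (hy : g ∣ m * y) : g ∣ m := by
  obtain ⟨s, t, hst⟩ := h
  have hm : m = s * (m * x) + t * (m * y) := by linear_combination (-m) * hst
  rw [hm]
  exact dvd_add (hx.mul_left s) (hy.mul_left t)

end IsCoprime

section

variable {R : Type*} [CommRing R]

theorem mul_dvd_of_mul_sub_mul_eq_mul {a b x y g₁ g₂ M D : R} (hab : IsCoprime a b)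
    (h₁x : g₁ ∣ x) (h₁b : g₁ ∣ b) (h₂y : g₂ ∣ y) (h₂a : g₂ ∣ a) (hM : M ∣ b - a)
    (heq : a * x - b * y = M * D) : g₁ * g₂ ∣ D := by
  have h₁MD : g₁ ∣ M * D := heq ▸ dvd_sub (h₁x.mul_left a) (h₁b.mul_right y)
  have h₂MD : g₂ ∣ M * D := heq ▸ dvd_sub (h₂a.mul_right x) (h₂y.mul_left b)
  have h₁₂ : IsCoprime g₁ g₂ :=
    (hab.symm.of_isCoprime_of_dvd_left h₁b).of_isCoprime_of_dvd_right h₂a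
  have h₁M : IsCoprime g₁ M :=
    (hab.sub_self_left.of_isCoprime_of_dvd_left h₁b).of_isCoprime_of_dvd_right hM
  have h₂M : IsCoprime g₂ M :=
    (hab.sub_self_right.of_isCoprime_of_dvd_left h₂a).of_isCoprime_of_dvd_right hM
  exact (h₁M.mul_left h₂M).dvd_of_dvd_mul_left (h₁₂.mul_dvd h₁MD h₂MD)

theorem dvd_mul_sq_sub_mul_sq {g a b u v : R} (hu : g ∣ u - v) (hb : g ∣ b - a) :
    g ∣ a * u ^ 2 - b * v ^ 2 := by
  have hsq : g ∣ u ^ 2 - v ^ 2 := by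
    rw [sq_sub_sq]
    exact hu.mul_left _
  rw [show a * u ^ 2 - b * v ^ 2 = a * (u ^ 2 - v ^ 2) - (b - a) * v ^ 2 by ring]
  exact dvd_sub (hsq.mul_left a) (hb.mul_right _)

end

theorem divisibility_constraints_general (a b u v : ℤ) (C₃ W : ℕ)
    (D : ℤ)
    (hab : IsCoprime a b)
    (hCWD : Int.gcd ((C₃ : ℤ) * (W : ℤ)) D = 1)
    (hdvd : (C₃ : ℤ) ∣ b - a)
    (heq : a * u ^ 2 - b * v ^ 2 = ((b - a) / (C₃ : ℤ)) * D) :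
    ((Int.gcd (u ^ 2) b : ℤ) * (Int.gcd (v ^ 2) a : ℤ)) ∣ D ∧
    (Int.gcd (u - v) (b - a) : ℤ) ∣ (b - a) / (C₃ : ℤ) := by
  set M := (b - a) / (C₃ : ℤ)
  have hCM : M * C₃ = b - a := Int.ediv_mul_cancel hdvd
  refine ⟨mul_dvd_of_mul_sub_mul_eq_mul hab (Int.gcd_dvd_left _ _) (Int.gcd_dvd_right _ _)
    (Int.gcd_dvd_left _ _) (Int.gcd_dvd_right _ _) ⟨C₃, hCM.symm⟩ heq, ?_⟩
  have hCD : IsCoprime (C₃ : ℤ) D :=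
    (Int.isCoprime_iff_gcd_eq_one.mpr hCWD).of_mul_left_left
  exact hCD.dvd_of_dvd_mul_of_dvd_mul (hCM ▸ Int.gcd_dvd_right _ _)
    (heq ▸ dvd_mul_sq_sub_mul_sq (Int.gcd_dvd_left _ _) (Int.gcd_dvd_right _ _))

/-- For solutions of `a u² − b v² = ((b−a)/C₃) D` with the stated coprimalities,
`gcd(u², b) · gcd(v², a)` divides `D` and `gcd(u − v, b − a)` divides `(b − a)/C₃`. -/
theorem divisibility_constraints (a b u v : ℤ) (C₃ W : ℕ) (hC : 0 < C₃) (hW : 0 < W)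
    (D : ℤ) (hD : D ≠ 0)
    (hab : IsCoprime a b) (huv : IsCoprime u v)
    (hCWD : Int.gcd ((C₃ : ℤ) * (W : ℤ)) D = 1)
    (hdvd : (C₃ : ℤ) ∣ b - a)
    (heq : a * u ^ 2 - b * v ^ 2 = ((b - a) / (C₃ : ℤ)) * D) :
    ((Int.gcd (u ^ 2) b : ℤ) * (Int.gcd (v ^ 2) a : ℤ)) ∣ D ∧
    (Int.gcd (u - v) (b - a) : ℤ) ∣ (b - a) / (C₃ : ℤ) :=
  divisibility_constraints_general a b u v C₃ W D hab hCWD hdvd heq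
end

section
/- Fix q ∈ ℕ≥1, C₃ ∈ ℕ≥1, D ∈ ℤ \ {0} with gcd(C₃, D) = 1. Let (u, v) be coprime integers with u + v > 0 and C₃·min(u², v²) > −D, and let (a, b) be the coprime pair a = (C₃v² + D)/k, b = (C₃u² + D)/k with k = gcd(C₃u² + D, C₃v² + D), and assume b > a. Then (u + v) ∣ q·k if and only if (b − a)/(C₃·q') = gcd(u − v, b − a) for some divisor q' of q, equivalently (b − a)/(C₃·gcd(u − v, b − a)) divides q. -/
/-!
Write `X = C₃u² + D` and `Y = C₃v² + D`, so `k(b − a) = X − Y = C₃(u + v)(u − v)`. Since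
`gcd(C₃, X) = gcd(C₃, D) = 1`, `C₃` is prime to `k`, hence `b − a = C₃m` with `km = (u + v)(u − v)`.
Multiplying by `u − v` and cancelling `k`, `u + v ∣ qk` becomes `m ∣ q(u − v)`; as `m ∣ b − a`
this is `m ∣ q·gcd(u − v, b − a)`, and `g = gcd(u − v, b − a)` divides `m`, so it is `m / g ∣ q`.
-/

theorem dvd_mul_iff_dvd_mul_of_mul_eq {α : Type*} [CommMonoidWithZero α]
    [IsCancelMulZero α] {k m s t : α}
    (q : α) (hk : k ≠ 0) (ht : t ≠ 0) (h : k * m = s * t) : s ∣ q * k ↔ m ∣ q * t := by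
  rw [← mul_dvd_mul_iff_right ht, ← mul_dvd_mul_iff_left hk (b := m), h,
    show q * k * t = k * (q * t) by rw [mul_comm q k, mul_assoc]]

theorem IsCoprime.dvd_of_dvd_mul_of_dvd_mul_s6 {R : Type*} [CommSemiring R] {c k g m : R}
    (hck : IsCoprime c k) (hc : g ∣ c * m) (hk : g ∣ k * m) : g ∣ m := by
  obtain ⟨x, y, hxy⟩ := hck
  have hm : m = x * (c * m) + y * (k * m) :=
    calc m = (x * c + y * k) * m := by rw [hxy, one_mul]
      _ = x * (c * m) + y * (k * m) := by ring
  rw [hm]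
  exact dvd_add (hc.mul_left x) (hk.mul_left y)

theorem Int.dvd_mul_iff_dvd_mul_gcd {m n : ℤ} (q t : ℤ) (hmn : m ∣ n) :
    m ∣ q * t ↔ m ∣ q * Int.gcd t n := by
  refine ⟨fun hqt => ?_, fun hqg => hqg.trans (mul_dvd_mul_left q (Int.gcd_dvd_left _ _))⟩
  have hgcd : m ∣ (Int.gcd (q * t) (q * n) : ℤ) := Int.dvd_coe_gcd hqt (hmn.mul_left q)
  rw [Int.gcd_mul_left, Nat.cast_mul, Int.natCast_natAbs] at hgcd
  exact hgcd.trans (mul_dvd_mul_right (abs_dvd_self q) _)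

theorem Int.dvd_mul_iff_div_mul_gcd_dvd {c k n s t : ℤ} (q : ℤ) (hc : c ≠ 0) (hk : k ≠ 0)
    (ht : t ≠ 0) (hck : IsCoprime c k) (h : k * n = c * (s * t)) :
    s ∣ q * k ↔ n / (c * Int.gcd t n) ∣ q := by
  obtain ⟨m, rfl⟩ : c ∣ n := hck.dvd_of_dvd_mul_left ⟨s * t, h⟩
  have hkm : k * m = s * t := mul_left_cancel₀ hc (by linear_combination h)
  set g : ℤ := (Int.gcd t (c * m) : ℤ)
  have hg : g ≠ 0 := Int.natCast_ne_zero.mpr (Int.gcd_pos_of_ne_zero_left _ ht).ne'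
  obtain ⟨m', hm'⟩ : g ∣ m :=
    hck.dvd_of_dvd_mul_of_dvd_mul_s6 (Int.gcd_dvd_right _ _)
      (hkm ▸ (Int.gcd_dvd_left _ _).mul_left s)
  have hquot : c * m / (c * g) = m' := by
    rw [show c * m = c * g * m' by rw [mul_assoc, ← hm']]
    exact Int.mul_ediv_cancel_left _ (mul_ne_zero hc hg)
  rw [dvd_mul_iff_dvd_mul_of_mul_eq q hk ht hkm, Int.dvd_mul_iff_dvd_mul_gcd q t (dvd_mul_left m c),
    hquot]
  change m ∣ q * g ↔ m' ∣ q
  rw [hm', mul_comm q, mul_dvd_mul_iff_left hg]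

theorem key_translation_general (q C₃ : ℕ) (hC : 1 ≤ C₃) (D : ℤ)
    (hCD : Int.gcd (C₃ : ℤ) D = 1)
    (u v : ℤ)
    (k a b : ℤ)
    (hk : k = (Int.gcd ((C₃ : ℤ) * u ^ 2 + D) ((C₃ : ℤ) * v ^ 2 + D) : ℤ))
    (ha : a = ((C₃ : ℤ) * v ^ 2 + D) / k)
    (hb : b = ((C₃ : ℤ) * u ^ 2 + D) / k)
    (hba : a < b) :
    (u + v) ∣ (q : ℤ) * k ↔
      (b - a) / ((C₃ : ℤ) * (Int.gcd (u - v) (b - a) : ℤ)) ∣ (q : ℤ) := by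
  have hkX : k ∣ C₃ * u ^ 2 + D := hk ▸ Int.gcd_dvd_left _ _
  have hkY : k ∣ C₃ * v ^ 2 + D := hk ▸ Int.gcd_dvd_right _ _
  have hdiff : k * (b - a) = C₃ * ((u + v) * (u - v)) := by
    rw [mul_sub, hb, ha, Int.mul_ediv_cancel' hkX, Int.mul_ediv_cancel' hkY]
    ring
  -- with `k = 0` the divisions give `a = b = 0`
  have hk0 : k ≠ 0 := by
    rintro rfl
    simp [ha, hb] at hba
  have huv : u - v ≠ 0 := by
    rw [sub_ne_zero]
    rintro rfl
    exact hba.ne (ha.trans hb.symm)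
  have hcop : IsCoprime (C₃ : ℤ) k :=
    ((Int.isCoprime_iff_gcd_eq_one.mpr hCD).mul_add_left_right (u ^ 2)).of_isCoprime_of_dvd_right
      hkX
  exact Int.dvd_mul_iff_div_mul_gcd_dvd q (by positivity) hk0 huv hcop hdiff

/-- Key translation: for the pair `(a,b)` parametrized by `k = gcd(C₃ u² + D, C₃ v² + D)`,
the condition `(u + v) ∣ q k` is equivalent to `(b − a)/(C₃ gcd(u − v, b − a)) ∣ q`. -/
theorem key_translation (q C₃ : ℕ) (hq : 1 ≤ q) (hC : 1 ≤ C₃) (D : ℤ) (hD : D ≠ 0)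
    (hCD : Int.gcd (C₃ : ℤ) D = 1)
    (u v : ℤ) (huv : IsCoprime u v) (hsum : 0 < u + v)
    (hmin : (C₃ : ℤ) * min (u ^ 2) (v ^ 2) > -D)
    (k a b : ℤ)
    (hk : k = (Int.gcd ((C₃ : ℤ) * u ^ 2 + D) ((C₃ : ℤ) * v ^ 2 + D) : ℤ))
    (ha : a = ((C₃ : ℤ) * v ^ 2 + D) / k)
    (hb : b = ((C₃ : ℤ) * u ^ 2 + D) / k)
    (hba : a < b) :
    (u + v) ∣ (q : ℤ) * k ↔
      (b - a) / ((C₃ : ℤ) * (Int.gcd (u - v) (b - a) : ℤ)) ∣ (q : ℤ) :=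
  key_translation_general q C₃ hC D hCD u v k a b hk ha hb hba
end

section
/- On the surface Y₃ (blow-up of ℙ¹×ℙ¹ at the three torus-invariant points P₁ = [1:0]×[1:0], P₂ = [0:1]×[1:0], P₃ = [1:0]×[0:1]), with anticanonical height H(P) = max(|x²st|,|y²st|,|t²xy|,|s²xy|,|xyst|,|y²t²|)/gcd(...) for P = [x:y]×[s:t] in coprime coordinates, and distance d(P) = max(|x/y − 1|, |s/t − 1|) to Q = [1:1]×[1:1]: for every rational point P ≠ Q with s ≠ t one has H(P)·d(P)² ≥ 1. -/
/-!
Let `G` be the gcd of the six monomials and `M` their maximum. Any nonzero integer `n`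
divisible by `G` satisfies `G ≤ |n|`, so it suffices to exhibit one with `|n| ≤ M d(P)²`.
If `x = 0` then `d(P) ≥ |0/y − 1| = 1` and `n = y²t²` works. Otherwise
`n = xy(s − t)² = s²xy − 2xyst + t²xy` is divisible by `G` and nonzero since `s ≠ t`,
while `|n| = |t²xy| (s/t − 1)² ≤ M d(P)²`.
-/

theorem one_le_div_mul_of_dvd {g : ℕ} {n : ℤ} {m δ : ℝ} (hn : n ≠ 0) (hg : (g : ℤ) ∣ n)
    (h : |(n : ℝ)| ≤ m * δ) : 1 ≤ m / g * δ := by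
  have hg_le : (g : ℤ) ≤ |n| := Int.le_of_dvd (abs_pos.mpr hn) ((dvd_abs _ _).mpr hg)
  have hg_pos : (0 : ℝ) < g := by
    exact_mod_cast Nat.pos_of_ne_zero (by rintro rfl; exact hn (zero_dvd_iff.mp hg))
  rw [div_mul_eq_mul_div, le_div_iff₀ hg_pos, one_mul]
  exact le_trans (by exact_mod_cast hg_le) h

theorem abs_mul_sub_sq_eq {t : ℝ} (ht : t ≠ 0) (a s : ℝ) :
    |a * (s - t) ^ 2| = |t ^ 2 * a| * (s / t - 1) ^ 2 := by
  rw [abs_mul, abs_mul, abs_of_nonneg (sq_nonneg (s - t)), abs_of_nonneg (sq_nonneg t)]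
  field_simp

namespace Y3

/-- The anticanonical height of `[x:y]×[s:t]` is `monomialMax x y s t / monomialGcd x y s t`. -/
def monomialMax (x y s t : ℤ) : ℤ :=
  max (max (max |x ^ 2 * s * t| |y ^ 2 * s * t|) (max |t ^ 2 * x * y| |s ^ 2 * x * y|))
    (max |x * y * s * t| |y ^ 2 * t ^ 2|)

def monomialGcd (x y s t : ℤ) : ℕ :=
  Int.gcd (x ^ 2 * s * t) (Int.gcd (y ^ 2 * s * t) (Int.gcd (t ^ 2 * x * y)
    (Int.gcd (s ^ 2 * x * y) (Int.gcd (x * y * s * t) (y ^ 2 * t ^ 2)))))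

variable (x y s t : ℤ)

theorem abs_sq_mul_sq_le_monomialMax : |y ^ 2 * t ^ 2| ≤ monomialMax x y s t :=
  (le_max_right _ _).trans (le_max_right _ _)

theorem abs_sq_mul_mul_le_monomialMax : |t ^ 2 * x * y| ≤ monomialMax x y s t :=
  ((le_max_left _ _).trans (le_max_right _ _)).trans (le_max_left _ _)

theorem monomialGcd_dvd_sq_mul_sq : (monomialGcd x y s t : ℤ) ∣ y ^ 2 * t ^ 2 :=
  (Int.gcd_dvd_right _ _).trans <| (Int.gcd_dvd_right _ _).trans <|
    (Int.gcd_dvd_right _ _).trans <| (Int.gcd_dvd_right _ _).trans (Int.gcd_dvd_right _ _)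

theorem monomialGcd_dvd_mul_sub_sq : (monomialGcd x y s t : ℤ) ∣ x * y * (s - t) ^ 2 := by
  have hG : (monomialGcd x y s t : ℤ) ∣ Int.gcd (t ^ 2 * x * y)
      (Int.gcd (s ^ 2 * x * y) (Int.gcd (x * y * s * t) (y ^ 2 * t ^ 2))) :=
    (Int.gcd_dvd_right _ _).trans (Int.gcd_dvd_right _ _)
  have h_txy := hG.trans (Int.gcd_dvd_left _ _)
  have hG' := hG.trans (Int.gcd_dvd_right _ _)
  have h_sxy := hG'.trans (Int.gcd_dvd_left _ _)
  have h_xyst := (hG'.trans (Int.gcd_dvd_right _ _)).trans (Int.gcd_dvd_left _ _)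
  have hexpand : x * y * (s - t) ^ 2 = s ^ 2 * x * y - 2 * (x * y * s * t) + t ^ 2 * x * y := by
    ring
  rw [hexpand]
  exact (h_sxy.sub (h_xyst.mul_left 2)).add h_txy

end Y3

theorem height_distance_lower_bound_general (x y s t : ℤ)
    (hy : y ≠ 0) (ht : t ≠ 0) (hs : s ≠ t) :
    (1 : ℝ) ≤
      (((max (max (max |x ^ 2 * s * t| |y ^ 2 * s * t|)
              (max |t ^ 2 * x * y| |s ^ 2 * x * y|))
            (max |x * y * s * t| |y ^ 2 * t ^ 2|) : ℤ) : ℝ) /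
          ((Int.gcd (x ^ 2 * s * t)
              ((Int.gcd (y ^ 2 * s * t)
                ((Int.gcd (t ^ 2 * x * y)
                  ((Int.gcd (s ^ 2 * x * y)
                    ((Int.gcd (x * y * s * t) (y ^ 2 * t ^ 2) : ℤ)) : ℕ) : ℤ) : ℕ) : ℤ) : ℕ) : ℤ) : ℕ) : ℝ)) *
        (max |(x : ℝ) / (y : ℝ) - 1| |(s : ℝ) / (t : ℝ) - 1|) ^ 2 := by
  change 1 ≤ (Y3.monomialMax x y s t : ℝ) / (Y3.monomialGcd x y s t : ℝ) * _
  set d := max |(x : ℝ) / (y : ℝ) - 1| |(s : ℝ) / (t : ℝ) - 1|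
  have hM : |((y ^ 2 * t ^ 2 : ℤ) : ℝ)| ≤ Y3.monomialMax x y s t := by
    rw [← Int.cast_abs]
    exact_mod_cast Y3.abs_sq_mul_sq_le_monomialMax x y s t
  have hM0 : (0 : ℝ) ≤ Y3.monomialMax x y s t := (abs_nonneg _).trans hM
  rcases eq_or_ne x 0 with rfl | hx
  · have hd : 1 ≤ d := le_of_eq_of_le (by simp) (le_max_left _ _)
    refine one_le_div_mul_of_dvd (by positivity) (Y3.monomialGcd_dvd_sq_mul_sq 0 y s t) ?_
    exact hM.trans (le_mul_of_one_le_right hM0 (one_le_pow₀ hd))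
  · refine one_le_div_mul_of_dvd (by simp [hx, hy, sub_eq_zero, hs])
      (Y3.monomialGcd_dvd_mul_sub_sq x y s t) ?_
    have hsd : ((s : ℝ) / t - 1) ^ 2 ≤ d ^ 2 :=
      sq_le_sq.mpr ((le_max_right _ _).trans (le_abs_self d))
    calc |((x * y * (s - t) ^ 2 : ℤ) : ℝ)|
        = |((t ^ 2 * x * y : ℤ) : ℝ)| * ((s : ℝ) / t - 1) ^ 2 := by
          push_cast
          rw [abs_mul_sub_sq_eq (by exact_mod_cast ht), mul_assoc]
      _ ≤ Y3.monomialMax x y s t * d ^ 2 := by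
          refine mul_le_mul ?_ hsd (sq_nonneg _) hM0
          rw [← Int.cast_abs]
          exact_mod_cast Y3.abs_sq_mul_mul_le_monomialMax x y s t

/-- On `Y₃`, with anticanonical height `H(P)` (maximum of the six monomials divided by
their gcd) and distance `d(P) = max(|x/y − 1|, |s/t − 1|)` to `Q = [1:1]×[1:1]`:
every rational point with `s ≠ t` satisfies `H(P) d(P)² ≥ 1`. -/
theorem height_distance_lower_bound (x y s t : ℤ)
    (hxy : IsCoprime x y) (hst : IsCoprime s t)
    (hy : y ≠ 0) (ht : t ≠ 0) (hs : s ≠ t) :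
    (1 : ℝ) ≤
      (((max (max (max |x ^ 2 * s * t| |y ^ 2 * s * t|)
              (max |t ^ 2 * x * y| |s ^ 2 * x * y|))
            (max |x * y * s * t| |y ^ 2 * t ^ 2|) : ℤ) : ℝ) /
          ((Int.gcd (x ^ 2 * s * t)
              ((Int.gcd (y ^ 2 * s * t)
                ((Int.gcd (t ^ 2 * x * y)
                  ((Int.gcd (s ^ 2 * x * y)
                    ((Int.gcd (x * y * s * t) (y ^ 2 * t ^ 2) : ℤ)) : ℕ) : ℤ) : ℕ) : ℤ) : ℕ) : ℤ) : ℕ) : ℝ)) *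
        (max |(x : ℝ) / (y : ℝ) - 1| |(s : ℝ) / (t : ℝ) - 1|) ^ 2 :=
  height_distance_lower_bound_general x y s t hy ht hs
end

section
/- Let x, y, s, t be integers with gcd(x,y) = gcd(s,t) = 1. Then gcd(x²st, y²st, t²xy, s²xy, xyst, y²t²) = gcd(x,t)·gcd(y,s)·gcd(y,t). -/
/-!
Pairing the first two sections, `gcd(x²st, y²st) = st` since `x, y` are coprime, and likewise
`gcd(t²xy, s²xy) = xy`; the section `xyst` is then redundant, so the gcd is
`gcd(gcd(xy, st), y²t²)`. Coprimality splits `gcd(xy, st)` into the four pairwise gcds of the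
variables; `gcd(x,s)` is coprime to `y²t²`, while `gcd(x,t)·gcd(y,s)·gcd(y,t)` divides `yt`.
-/

namespace Nat

theorem Coprime.dvd_mul_and_dvd_mul_iff {a b n d : ℕ} (h : Coprime a b) :
    d ∣ a * n ∧ d ∣ b * n ↔ d ∣ n := by
  rw [← dvd_gcd_iff, gcd_mul_right, h.gcd_eq_one, one_mul]

theorem gcd_mul_mul_of_coprime {x y s t : ℕ} (hxy : Coprime x y) (hst : Coprime s t) :
    gcd (x * y) (s * t) = gcd x s * (gcd x t * gcd y s * gcd y t) := by
  rw [hst.gcd_mul, gcd_comm _ s, gcd_comm _ t, hxy.gcd_mul, hxy.gcd_mul, gcd_comm s x,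
    gcd_comm s y, gcd_comm t x, gcd_comm t y]
  ring

theorem gcd_mul_gcd_mul_gcd_dvd {x y s t : ℕ} (hst : Coprime s t) :
    gcd x t * gcd y s * gcd y t ∣ y * t := by
  have hdvd_y : gcd y s * gcd y t ∣ y :=
    ((hst.coprime_dvd_left (gcd_dvd_right y s)).coprime_dvd_right
      (gcd_dvd_right y t)).mul_dvd_of_dvd_of_dvd (gcd_dvd_left y s) (gcd_dvd_left y t)
  rw [mul_assoc, mul_comm y]
  exact mul_dvd_mul (gcd_dvd_right x t) hdvd_y

theorem coprime_gcd_sq_mul_sq {x y s t : ℕ} (hxy : Coprime x y) (hst : Coprime s t) :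
    Coprime (gcd x s) (y ^ 2 * t ^ 2) :=
  ((hxy.coprime_dvd_left (gcd_dvd_left x s)).pow_right 2).mul_right
    ((hst.coprime_dvd_left (gcd_dvd_right x s)).pow_right 2)

theorem gcd_six_sections_eq {x y s t : ℕ} (hxy : Coprime x y) (hst : Coprime s t) :
    gcd (x ^ 2 * s * t) (gcd (y ^ 2 * s * t) (gcd (t ^ 2 * x * y) (gcd (s ^ 2 * x * y)
      (gcd (x * y * s * t) (y ^ 2 * t ^ 2))))) = gcd (gcd (x * y) (s * t)) (y ^ 2 * t ^ 2) := by
  refine eq_of_forall_dvd' fun d => ?_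
  have hdvd_st := (hxy.pow 2 2).dvd_mul_and_dvd_mul_iff (d := d) (n := s * t)
  have hdvd_xy := (hst.pow 2 2).dvd_mul_and_dvd_mul_iff (d := d) (n := x * y)
  simp only [dvd_gcd_iff, mul_assoc] at hdvd_st hdvd_xy ⊢
  constructor
  · rintro ⟨h1, h2, h3, h4, -, h6⟩
    exact ⟨⟨hdvd_xy.1 ⟨h4, h3⟩, hdvd_st.1 ⟨h1, h2⟩⟩, h6⟩
  · rintro ⟨⟨hdxy, hdst⟩, h6⟩
    exact ⟨dvd_mul_of_dvd_right hdst _, dvd_mul_of_dvd_right hdst _, dvd_mul_of_dvd_right hdxy _,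
      dvd_mul_of_dvd_right hdxy _,
      dvd_mul_of_dvd_right (dvd_mul_of_dvd_right hdst _) _, h6⟩

theorem gcd_gcd_mul_mul_sq_mul_sq {x y s t : ℕ} (hxy : Coprime x y) (hst : Coprime s t) :
    gcd (gcd (x * y) (s * t)) (y ^ 2 * t ^ 2) = gcd x t * gcd y s * gcd y t := by
  rw [gcd_mul_mul_of_coprime hxy hst, (coprime_gcd_sq_mul_sq hxy hst).gcd_mul_left_cancel,
    gcd_eq_left ((gcd_mul_gcd_mul_gcd_dvd hst).trans ⟨y * t, by ring⟩)]

end Nat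

/-- For `gcd(x,y) = gcd(s,t) = 1`:
`gcd(x²st, y²st, t²xy, s²xy, xyst, y²t²) = gcd(x,t)·gcd(y,s)·gcd(y,t)`. -/
theorem gcd_of_six_sections (x y s t : ℤ) (hxy : IsCoprime x y) (hst : IsCoprime s t) :
    Int.gcd (x ^ 2 * s * t)
        ((Int.gcd (y ^ 2 * s * t)
          ((Int.gcd (t ^ 2 * x * y)
            ((Int.gcd (s ^ 2 * x * y)
              ((Int.gcd (x * y * s * t) (y ^ 2 * t ^ 2) : ℤ)) : ℕ) : ℤ) : ℕ) : ℤ) : ℕ) : ℤ) =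
      Int.gcd x t * Int.gcd y s * Int.gcd y t := by
  have hXY : Nat.Coprime x.natAbs y.natAbs := Int.isCoprime_iff_gcd_eq_one.mp hxy
  have hST : Nat.Coprime s.natAbs t.natAbs := Int.isCoprime_iff_gcd_eq_one.mp hst
  have := (Nat.gcd_six_sections_eq hXY hST).trans (Nat.gcd_gcd_mul_mul_sq_mul_sq hXY hST)
  simpa [Int.gcd, Int.natAbs_mul, Int.natAbs_pow] using this
end
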